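/- If φ is a multiplier of W, then 1 - φ is a multiplier of W, and more generally (1 - φⁿ)ᵐ is a multiplier of W for all n, m ∈ ℕ₊. -/

import Mathlib

/-- `φ` is a multiplier of `W`: `φ·f + (1-φ)·g ∈ W` for all `f, g ∈ W`. -/
def IsMultiplier {Ω X : Type*} [TopologicalSpace Ω] [AddCommGroup X] [Module ℂ X]
    [TopologicalSpace X] [IsTopologicalAddGroup X] [ContinuousSMul ℂ X]
    (φ : C(Ω, ℂ)) (W : Set C(Ω, X)) : Prop :=
  ∀ f ∈ W, ∀ g ∈ W, φ • f + (1 - φ) • g ∈ W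

namespace IsMultiplier

variable {Ω X : Type*} [TopologicalSpace Ω] [AddCommGroup X] [Module ℂ X]
    [TopologicalSpace X] [IsTopologicalAddGroup X] [ContinuousSMul ℂ X]
    {φ ψ : C(Ω, ℂ)} {W : Set C(Ω, X)}

theorem one : IsMultiplier (1 : C(Ω, ℂ)) W := by
  intro f hf g _
  convert hf using 1
  module

theorem one_sub (h : IsMultiplier φ W) : IsMultiplier (1 - φ) W := by
  intro f hf g hg
  convert h g hg f hf using 1
  module

-- Mix `f` and `g` with weight `ψ` first, then mix the result with `g` again with weight `φ`.
theorem mul (hφ : IsMultiplier φ W) (hψ : IsMultiplier ψ W) : IsMultiplier (φ * ψ) W := by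
  intro f hf g hg
  convert hφ _ (hψ f hf g hg) g hg using 1
  module

theorem pow (h : IsMultiplier φ W) (n : ℕ) : IsMultiplier (φ ^ n) W := by
  induction n with
  | zero => rw [pow_zero]; exact one
  | succ n ih => rw [pow_succ]; exact ih.mul h

end IsMultiplier

theorem multiplier_one_sub_pow {Ω X : Type*} [TopologicalSpace Ω] [AddCommGroup X] [Module ℂ X]
    [TopologicalSpace X] [IsTopologicalAddGroup X] [ContinuousSMul ℂ X]
    (φ : C(Ω, ℂ)) (W : Set C(Ω, X)) (h : IsMultiplier φ W) :
    IsMultiplier (1 - φ) W ∧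
      ∀ n m : ℕ, 0 < n → 0 < m → IsMultiplier ((1 - φ ^ n) ^ m) W :=
  ⟨h.one_sub, fun n m _ _ => ((h.pow n).one_sub).pow m⟩
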